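/- arXiv:2108.04120 — 2 statements merged into one kernel-verified Lean document; each statement's English description precedes it below -/
import Mathlib

section
/- Fix τ = x + iy with y > 0. The matrix-valued function of s given by F(s) = (s−2) · π^{1/2} · y^{1−s} · (Γ(s−1/2)·ζ(2s−3))/(Γ(s)·ζ(2s−2)) · [[1,0],[−τ,1]] · [[1, −iy],[iy, ((2s−2)/(2s−3))·y²]] · [[1, −conj(τ)],[0,1]] tends, as s → 2 with s ≠ 2, to (3/(2πy)) · [[1, −x],[−x, x²+y²]]. -/
open Matrix Complex Topology Filter

/-!
Near `s = 2` the only singular factor is `ζ(2s - 3)`, whose simple pole at `2s - 3 = 1` has residue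
`1/2` in the variable `s`; it cancels the zero of `s - 2`. Everything else is continuous at `s = 2`,
so the limit is obtained by evaluating at `s = 2`, using `Γ(3/2) = √π/2`, `Γ(2) = 1` and
`ζ(2) = π²/6` for the scalar factor; the middle matrix becomes `[[1, -iy], [iy, 2y²]]`, and the
congruence by the two unipotent matrices takes it to `[[1, -x], [-x, x² + y²]]`.
-/

lemma tendsto_affine_nhdsNE {a : ℂ} (ha : a ≠ 0) (s₀ b : ℂ) :
    Tendsto (fun s => a * (s - s₀) + b) (𝓝[≠] s₀) (𝓝[≠] b) := by
  refine tendsto_nhdsWithin_of_tendsto_nhds_of_eventually_within _ ?_ ?_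
  · exact ((by fun_prop : Continuous fun s => a * (s - s₀) + b).tendsto' s₀ b (by simp)).mono_left
      nhdsWithin_le_nhds
  · exact eventually_nhdsWithin_of_forall fun s hs => by simpa [ha, sub_eq_zero] using hs

lemma tendsto_mul_riemannZeta_affine {a : ℂ} (ha : a ≠ 0) (s₀ : ℂ) :
    Tendsto (fun s => a * (s - s₀) * riemannZeta (a * (s - s₀) + 1)) (𝓝[≠] s₀) (𝓝 1) := by
  simpa [Function.comp_def] using riemannZeta_residue_one.comp (tendsto_affine_nhdsNE ha s₀ 1)

lemma Complex.differentiableAt_Gamma_of_re_pos {s : ℂ} (hs : 0 < s.re) :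
    DifferentiableAt ℂ Gamma s :=
  differentiableAt_Gamma s fun m h => by
    have h_re := congrArg re h
    simp only [neg_re, natCast_re] at h_re
    linarith [(m.cast_nonneg : (0 : ℝ) ≤ m)]

lemma Complex.Gamma_three_halves : Gamma (3 / 2) = Real.sqrt Real.pi / 2 := by
  rw [show (3 / 2 : ℂ) = 1 / 2 + 1 by norm_num, Gamma_add_one _ (by norm_num), Gamma_one_half_eq,
    Real.sqrt_eq_rpow, ofReal_cpow Real.pi_pos.le]
  push_cast
  ring

lemma tendsto_eisenstein_scalar_residue {y : ℂ} (hy : y ≠ 0) :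
    Tendsto (fun s : ℂ => (s - 2) * (Real.sqrt Real.pi : ℂ) * y ^ (1 - s) *
        (Gamma (s - 1 / 2) * riemannZeta (2 * s - 3)) / (Gamma s * riemannZeta (2 * s - 2)))
      (𝓝[≠] 2) (𝓝 (3 / (2 * Real.pi * y))) := by
  set g : ℂ → ℂ := fun s => Real.sqrt Real.pi * y ^ (1 - s) * Gamma (s - 1 / 2) /
    (2 * (Gamma s * riemannZeta (2 * s - 2)))
  have hg : ContinuousAt g 2 := by
    have hpow : ContinuousAt (fun s : ℂ => y ^ (1 - s)) 2 :=
      (continuousAt_const_cpow hy).comp' (by fun_prop)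
    have hΓ_sub : ContinuousAt (fun s : ℂ => Gamma (s - 1 / 2)) 2 :=
      (differentiableAt_Gamma_of_re_pos (by norm_num)).continuousAt.comp' (by fun_prop)
    have hΓ : ContinuousAt Gamma 2 := (differentiableAt_Gamma_of_re_pos (by norm_num)).continuousAt
    have hζ : ContinuousAt (fun s : ℂ => riemannZeta (2 * s - 2)) 2 :=
      (differentiableAt_riemannZeta (s := 2 * 2 - 2) (by norm_num)).continuousAt.comp
        (f := fun s => 2 * s - 2) (by fun_prop)
    refine (continuousAt_const.mul hpow |>.mul hΓ_sub).div (continuousAt_const.mul (hΓ.mul hζ)) ?_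
    norm_num [Gamma_ofNat_eq_factorial, riemannZeta_two, Real.pi_ne_zero]
  have hg_two : g 2 = 3 / (2 * Real.pi * y) := by
    have hπ : (Real.pi : ℂ) ≠ 0 := ofReal_ne_zero.2 Real.pi_ne_zero
    have hsqrt : ((Real.sqrt Real.pi : ℝ) : ℂ) ^ 2 = Real.pi := by
      rw [← ofReal_pow, Real.sq_sqrt Real.pi_pos.le]
    simp only [g]
    rw [show (2 : ℂ) - 1 / 2 = 3 / 2 by norm_num, show (2 * 2 - 2 : ℂ) = 2 by norm_num,
      show (1 - 2 : ℂ) = -1 by norm_num, cpow_neg_one, Gamma_three_halves, riemannZeta_two]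
    simp only [Gamma_ofNat_eq_factorial, Nat.factorial_one, Nat.cast_one]
    field_simp
    linear_combination 6 * hsqrt
  have h := (tendsto_mul_riemannZeta_affine two_ne_zero 2).mul hg.continuousWithinAt
  rw [one_mul, hg_two] at h
  refine h.congr fun s => ?_
  simp only [g, show 2 * (s - 2) + 1 = 2 * s - 3 by ring]
  ring

lemma eisenstein_matrix_congruence (x y : ℝ) :
    !![1, 0; -((x : ℂ) + y * I), 1] * !![1, -(I * y); I * y, 2 * (y : ℂ) ^ 2] *
      !![1, -(starRingEnd ℂ ((x : ℂ) + y * I)); 0, 1] =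
      !![1, -(x : ℂ); -(x : ℂ), (x : ℂ) ^ 2 + (y : ℂ) ^ 2] := by
  ext i j
  fin_cases i <;> fin_cases j <;>
    simp [Matrix.mul_apply, Fin.sum_univ_two, Complex.ext_iff, ← ofReal_pow]
  ring

lemma tendsto_eisenstein_matrix (x y : ℝ) :
    Tendsto (fun s : ℂ => !![1, 0; -((x : ℂ) + y * I), 1] *
        !![1, -(I * y); I * y, ((2 * s - 2) / (2 * s - 3)) * (y : ℂ) ^ 2] *
        !![1, -(starRingEnd ℂ ((x : ℂ) + y * I)); 0, 1])
      (𝓝[≠] 2) (𝓝 !![1, -(x : ℂ); -(x : ℂ), (x : ℂ) ^ 2 + (y : ℂ) ^ 2]) := by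
  have h_ne : (2 * 2 - 3 : ℂ) ≠ 0 := by norm_num
  have hcont : ContinuousAt (fun s : ℂ => !![1, 0; -((x : ℂ) + y * I), 1] *
      !![1, -(I * y); I * y, ((2 * s - 2) / (2 * s - 3)) * (y : ℂ) ^ 2] *
      !![1, -(starRingEnd ℂ ((x : ℂ) + y * I)); 0, 1]) 2 := by
    fun_prop (disch := exact h_ne)
  rw [← eisenstein_matrix_congruence]
  convert hcont.continuousWithinAt.tendsto using 3
  norm_num

/-- the residue computation at `s = 2` of the constant term of the
Eisenstein metric for the inclusion representation of `SL(2,ℤ)`: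
`(s−2) · √π · y^{1−s} · Γ(s−1/2)ζ(2s−3)/(Γ(s)ζ(2s−2)) ·
  [[1,0],[−τ,1]]·[[1,−iy],[iy,((2s−2)/(2s−3))y²]]·[[1,−τ̄],[0,1]]`
tends to `(3/(2πy))·[[1,−x],[−x,x²+y²]]` as `s → 2`, `s ≠ 2`. -/
theorem eisenstein_constant_term_residue (x y : ℝ) (hy : 0 < y) :
    Tendsto
      (fun s : ℂ =>
        ((s - 2) * (Real.sqrt Real.pi : ℂ) * (y : ℂ) ^ (1 - s) *
            (Complex.Gamma (s - 1 / 2) * riemannZeta (2 * s - 3)) /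
            (Complex.Gamma s * riemannZeta (2 * s - 2))) •
          (!![1, 0; -((x : ℂ) + y * I), 1] *
            !![1, -(I * y); I * y, ((2 * s - 2) / (2 * s - 3)) * (y : ℂ) ^ 2] *
            !![1, -(starRingEnd ℂ ((x : ℂ) + y * I)); 0, 1]))
      (𝓝[≠] (2 : ℂ))
      (𝓝 (((3 / (2 * Real.pi * y) : ℝ) : ℂ) •
        !![1, -(x : ℂ); -(x : ℂ), (x : ℂ) ^ 2 + (y : ℂ) ^ 2])) := by
  push_cast
  exact (tendsto_eisenstein_scalar_residue (ofReal_ne_zero.2 hy.ne')).smul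
    (tendsto_eisenstein_matrix x y)
end

section
/- Define K on {x+iy ∈ ℂ : y > 0} by K(x+iy) = (1/y)·[[1, −x],[−x, x²+y²]], a smooth function valued in invertible 2×2 complex matrices. Writing ∂F := (1/2)(∂F/∂x − i·∂F/∂y) and ∂̄F := (1/2)(∂F/∂x + i·∂F/∂y) for the Wirtinger derivatives of a matrix-valued function F(x+iy), and setting ∂log(H) := H⁻¹·∂H, ∂̄log(H) := H⁻¹·∂̄H and ∂∂̄log(H) := ∂(H⁻¹·∂̄H), K is harmonic: the condition ∂∂̄log(H) = (1/2)[∂̄log(H), ∂log(H)] holds for H = K at every τ with Im τ > 0. -/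
open Matrix Complex

noncomputable section

/-- Wirtinger derivative `∂f := (1/2)(∂f/∂x − i·∂f/∂y)` of a function `f : ℂ → ℂ`. -/
def wirtD (f : ℂ → ℂ) (τ : ℂ) : ℂ :=
  (1 / 2) * (fderiv ℝ f τ 1 - Complex.I * fderiv ℝ f τ Complex.I)

/-- Wirtinger derivative `∂̄f := (1/2)(∂f/∂x + i·∂f/∂y)` of a function `f : ℂ → ℂ`. -/
def wirtDbar (f : ℂ → ℂ) (τ : ℂ) : ℂ :=
  (1 / 2) * (fderiv ℝ f τ 1 + Complex.I * fderiv ℝ f τ Complex.I)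

/-- Entrywise Wirtinger derivative `∂F` of a matrix-valued function. -/
def mD {d : ℕ} (F : ℂ → Matrix (Fin d) (Fin d) ℂ) (τ : ℂ) : Matrix (Fin d) (Fin d) ℂ :=
  Matrix.of fun i j => wirtD (fun z => F z i j) τ

/-- Entrywise Wirtinger derivative `∂̄F` of a matrix-valued function. -/
def mDbar {d : ℕ} (F : ℂ → Matrix (Fin d) (Fin d) ℂ) (τ : ℂ) : Matrix (Fin d) (Fin d) ℂ :=
  Matrix.of fun i j => wirtDbar (fun z => F z i j) τ

/-- The metric `K(x+iy) = (1/y)·[[1, −x],[−x, x²+y²]]`. -/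
def Kmet (τ : ℂ) : Matrix (Fin 2) (Fin 2) ℂ :=
  ((τ.im : ℂ))⁻¹ • !![1, -(τ.re : ℂ); -(τ.re : ℂ), (τ.re : ℂ) ^ 2 + (τ.im : ℂ) ^ 2]


-- ===== auxiliary machinery =====

/-- the real-linear map v ↦ a v + b v̄ -/
def Wmap (a b : ℂ) : ℂ →L[ℝ] ℂ :=
  a • (ContinuousLinearMap.id ℝ ℂ) + b • (Complex.conjCLE : ℂ ≃L[ℝ] ℂ).toContinuousLinearMap

@[simp] lemma Wmap_apply (a b v : ℂ) : Wmap a b v = a * v + b * (starRingEnd ℂ) v := by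
  simp [Wmap, smul_eq_mul]

lemma clm_ext {L M : ℂ →L[ℝ] ℂ} (h1 : L 1 = M 1) (hI : L I = M I) : L = M := by
  ext z
  have hz : ((z.re : ℝ) • (1:ℂ)) + ((z.im : ℝ) • I) = z := by
    simp [Complex.real_smul, Complex.re_add_im]
  calc L z = L ((z.re : ℝ) • (1:ℂ) + (z.im : ℝ) • I) := by rw [hz]
    _ = (z.re : ℝ) • L 1 + (z.im : ℝ) • L I := by rw [map_add, _root_.map_smul, _root_.map_smul]
    _ = (z.re : ℝ) • M 1 + (z.im : ℝ) • M I := by rw [h1, hI]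
    _ = M z := by rw [← _root_.map_smul, ← _root_.map_smul, ← map_add, hz]
def HasW (f : ℂ → ℂ) (a b : ℂ) (z : ℂ) : Prop := HasFDerivAt f (Wmap a b) z

lemma hasW_of {f : ℂ → ℂ} {L : ℂ →L[ℝ] ℂ} {a b z : ℂ} (h : HasFDerivAt f L z)
    (h1 : L 1 = a + b) (hI : L I = (a - b) * I) : HasW f a b z := by
  have : L = Wmap a b := clm_ext (by simp [h1]) (by simp [hI, Complex.conj_I]; ring)
  rw [HasW, ← this]; exact h

lemma HasW.congr_ab {f : ℂ → ℂ} {a b a' b' z : ℂ} (h : HasW f a b z)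
    (ha : a = a') (hb : b = b') : HasW f a' b' z := ha ▸ hb ▸ h

lemma HasW.wirtD {f : ℂ → ℂ} {a b z : ℂ} (h : HasW f a b z) : wirtD f z = a := by
  unfold _root_.wirtD
  rw [h.fderiv]
  simp [Complex.conj_I]
  ring_nf
  simp [Complex.I_sq]
  ring

lemma HasW.wirtDbar {f : ℂ → ℂ} {a b z : ℂ} (h : HasW f a b z) : wirtDbar f z = b := by
  unfold _root_.wirtDbar
  rw [h.fderiv]
  simp [Complex.conj_I]
  ring_nf
  simp [Complex.I_sq]
  ring

lemma hasW_const (c z : ℂ) : HasW (fun _ => c) 0 0 z :=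
  hasW_of (hasFDerivAt_const c z) (by simp) (by simp)

lemma hasW_re (z : ℂ) : HasW (fun w => (w.re : ℂ)) (1/2) (1/2) z :=
  hasW_of (Complex.ofRealCLM.comp Complex.reCLM).hasFDerivAt (by norm_num) (by norm_num)

lemma hasW_im (z : ℂ) : HasW (fun w => (w.im : ℂ)) (-(I/2)) (I/2) z :=
  hasW_of (Complex.ofRealCLM.comp Complex.imCLM).hasFDerivAt (by simp)
    (by simp; ring_nf; simp [Complex.I_sq])

lemma HasW.add {f g : ℂ → ℂ} {a b c d z : ℂ} (hf : HasW f a b z) (hg : HasW g c d z) :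
    HasW (fun w => f w + g w) (a + c) (b + d) z :=
  hasW_of (HasFDerivAt.add hf hg) (by simp; ring) (by simp; ring)

lemma HasW.neg {f : ℂ → ℂ} {a b z : ℂ} (hf : HasW f a b z) :
    HasW (fun w => -(f w)) (-a) (-b) z :=
  hasW_of (HasFDerivAt.neg hf) (by simp; ring) (by simp; ring)

lemma HasW.mul {f g : ℂ → ℂ} {a b c d z : ℂ} (hf : HasW f a b z) (hg : HasW g c d z) :
    HasW (fun w => f w * g w) (f z * c + g z * a) (f z * d + g z * b) z :=
  hasW_of (HasFDerivAt.mul hf hg) (by simp; ring) (by simp [Complex.conj_I]; ring)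

lemma HasW.inv {f : ℂ → ℂ} {a b z : ℂ} (hf : HasW f a b z) (h0 : f z ≠ 0) :
    HasW (fun w => (f w)⁻¹) (-(a / f z ^ 2)) (-(b / f z ^ 2)) z := by
  have hi := (hasFDerivAt_inv (𝕜 := ℂ) h0).restrictScalars ℝ
  have hc := hi.comp z hf
  refine hasW_of hc ?_ ?_ <;>
    simp [ContinuousLinearMap.smulRight_apply, smul_eq_mul, Complex.conj_I] <;> field_simp <;> ring

-- entry functions of Kmet
lemma Ke00 : (fun w : ℂ => Kmet w 0 0) = fun w => ((w.im : ℂ))⁻¹ := by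
  funext w
  simp only [Kmet, Matrix.smul_apply, Matrix.of_apply, Matrix.cons_val', Matrix.cons_val_zero,
    Matrix.empty_val', Matrix.cons_val_fin_one, smul_eq_mul, mul_one]
lemma Ke01 : (fun w : ℂ => Kmet w 0 1) = fun w => ((w.im : ℂ))⁻¹ * (-(w.re : ℂ)) := by
  funext w
  simp only [Kmet, Matrix.smul_apply, Matrix.of_apply, Matrix.cons_val', Matrix.cons_val_zero,
    Matrix.cons_val_one, Matrix.head_cons, Matrix.empty_val', Matrix.cons_val_fin_one,
    Matrix.head_fin_const, smul_eq_mul]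
lemma Ke10 : (fun w : ℂ => Kmet w 1 0) = fun w => ((w.im : ℂ))⁻¹ * (-(w.re : ℂ)) := by
  funext w
  simp only [Kmet, Matrix.smul_apply, Matrix.of_apply, Matrix.cons_val', Matrix.cons_val_zero,
    Matrix.cons_val_one, Matrix.head_cons, Matrix.empty_val', Matrix.cons_val_fin_one,
    Matrix.head_fin_const, smul_eq_mul]
lemma Ke11 : (fun w : ℂ => Kmet w 1 1) =
    fun w => ((w.im : ℂ))⁻¹ * ((w.re : ℂ) * (w.re : ℂ) + (w.im : ℂ) * (w.im : ℂ)) := by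
  funext w
  simp only [Kmet, Matrix.smul_apply, Matrix.of_apply, Matrix.cons_val', Matrix.cons_val_zero,
    Matrix.cons_val_one, Matrix.head_cons, Matrix.empty_val', Matrix.cons_val_fin_one,
    Matrix.head_fin_const, smul_eq_mul]
  ring

lemma mDbar_Kmet {z : ℂ} (hy : (z.im : ℂ) ≠ 0) :
    mDbar Kmet z =
      !![-(I / (2 * (z.im:ℂ)^2)),
         -(1 / (2 * (z.im:ℂ))) + (z.re:ℂ) * I / (2 * (z.im:ℂ)^2);
         -(1 / (2 * (z.im:ℂ))) + (z.re:ℂ) * I / (2 * (z.im:ℂ)^2),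
         (z.re:ℂ) / (z.im:ℂ) + I / 2 - (z.re:ℂ)^2 * I / (2 * (z.im:ℂ)^2)] := by
  ext i j
  fin_cases i <;> fin_cases j <;>
    simp only [Fin.mk_zero, Fin.mk_one, Fin.isValue, mDbar, Matrix.of_apply, Matrix.cons_val',
      Matrix.cons_val_zero, Matrix.cons_val_one, Matrix.head_cons, Matrix.empty_val',
      Matrix.cons_val_fin_one, Matrix.head_fin_const]
  · rw [Ke00, ((hasW_im z).inv hy).wirtDbar]; ring
  · rw [Ke01, (((hasW_im z).inv hy).mul (hasW_re z).neg).wirtDbar]; field_simp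
  · rw [Ke10, (((hasW_im z).inv hy).mul (hasW_re z).neg).wirtDbar]; field_simp
  · rw [Ke11, (((hasW_im z).inv hy).mul
        (((hasW_re z).mul (hasW_re z)).add ((hasW_im z).mul (hasW_im z)))).wirtDbar]
    field_simp
    ring

lemma mD_Kmet {z : ℂ} (hy : (z.im : ℂ) ≠ 0) :
    mD Kmet z =
      !![I / (2 * (z.im:ℂ)^2),
         -(1 / (2 * (z.im:ℂ))) - (z.re:ℂ) * I / (2 * (z.im:ℂ)^2);
         -(1 / (2 * (z.im:ℂ))) - (z.re:ℂ) * I / (2 * (z.im:ℂ)^2),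
         (z.re:ℂ) / (z.im:ℂ) - I / 2 + (z.re:ℂ)^2 * I / (2 * (z.im:ℂ)^2)] := by
  ext i j
  fin_cases i <;> fin_cases j <;>
    simp only [Fin.mk_zero, Fin.mk_one, Fin.isValue, mD, Matrix.of_apply, Matrix.cons_val',
      Matrix.cons_val_zero, Matrix.cons_val_one, Matrix.head_cons, Matrix.empty_val',
      Matrix.cons_val_fin_one, Matrix.head_fin_const]
  · rw [Ke00, ((hasW_im z).inv hy).wirtD]; ring
  · rw [Ke01, (((hasW_im z).inv hy).mul (hasW_re z).neg).wirtD]; field_simp; ring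
  · rw [Ke10, (((hasW_im z).inv hy).mul (hasW_re z).neg).wirtD]; field_simp; ring
  · rw [Ke11, (((hasW_im z).inv hy).mul
        (((hasW_re z).mul (hasW_re z)).add ((hasW_im z).mul (hasW_im z)))).wirtD]
    field_simp; ring

lemma Kmet_det {z : ℂ} (hy : (z.im : ℂ) ≠ 0) : (Kmet z).det = 1 := by
  simp [Kmet, Matrix.det_fin_two]
  field_simp
  ring

lemma Kinv {z : ℂ} (hy : (z.im : ℂ) ≠ 0) :
    (Kmet z)⁻¹ = !![((z.re:ℂ)^2 + (z.im:ℂ)^2) / (z.im:ℂ), (z.re:ℂ) / (z.im:ℂ);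
                    (z.re:ℂ) / (z.im:ℂ), ((z.im:ℂ))⁻¹] := by
  apply Matrix.inv_eq_right_inv
  ext i j
  fin_cases i <;> fin_cases j <;>
    simp [Kmet, Matrix.mul_apply, Fin.sum_univ_two, Matrix.one_apply] <;>
    field_simp <;> ring

def Zf (w : ℂ) : ℂ := (w.re : ℂ) + (w.im : ℂ) * I
def cf (w : ℂ) : ℂ := (2 * ((w.im : ℂ) * (w.im : ℂ)))⁻¹

def Bfun (w : ℂ) : Matrix (Fin 2) (Fin 2) ℂ :=
  !![cf w * (-(Zf w)), cf w * (Zf w * Zf w); cf w * (-1), cf w * Zf w]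

lemma keyB {z : ℂ} (hy : (z.im : ℂ) ≠ 0) :
    (Kmet z)⁻¹ * mDbar Kmet z = Bfun z := by
  rw [Kinv hy, mDbar_Kmet hy]
  ext i j
  fin_cases i <;> fin_cases j <;>
    simp only [Fin.mk_zero, Fin.mk_one, Fin.isValue, Matrix.mul_apply, Fin.sum_univ_two, Bfun, Zf,
      cf, Matrix.of_apply, Matrix.cons_val', Matrix.cons_val_zero, Matrix.cons_val_one,
      Matrix.head_cons, Matrix.empty_val', Matrix.cons_val_fin_one, Matrix.head_fin_const] <;>
  [skip; skip; skip; skip] <;>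
    have h4 : ((z.im:ℂ))^4 * (((z.im:ℂ))⁻¹)^4 = 1 := by
      rw [← mul_pow, mul_inv_cancel₀ hy, one_pow]
  · field_simp
    ring
  · field_simp
    linear_combination (-(z.im:ℂ)^3) * Complex.I_sq
  · field_simp
    ring
  · field_simp
    ring

lemma hasW_cf {z : ℂ} (hy : (z.im : ℂ) ≠ 0) :
    HasW cf (I / (2 * (z.im:ℂ)^3)) (-(I / (2 * (z.im:ℂ)^3))) z := by
  have h2 : (fun w : ℂ => 2 * ((w.im : ℂ) * (w.im : ℂ))) z ≠ 0 := by
    simp only []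
    exact mul_ne_zero two_ne_zero (mul_ne_zero hy hy)
  exact (((hasW_const 2 z).mul ((hasW_im z).mul (hasW_im z))).inv h2).congr_ab
    (by field_simp; ring) (by field_simp; ring)

lemma hasW_Zf (z : ℂ) : HasW Zf 1 0 z :=
  ((hasW_re z).add ((hasW_im z).mul (hasW_const I z))).congr_ab
    (by linear_combination (-(1:ℂ)/2) * Complex.I_sq)
    (by linear_combination ((1:ℂ)/2) * Complex.I_sq)

lemma Be00 : (fun w : ℂ => Bfun w 0 0) = fun w => cf w * (-(Zf w)) := by
  funext w
  simp only [Bfun, Matrix.of_apply, Matrix.cons_val', Matrix.cons_val_zero, Matrix.empty_val',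
    Matrix.cons_val_fin_one]
lemma Be01 : (fun w : ℂ => Bfun w 0 1) = fun w => cf w * (Zf w * Zf w) := by
  funext w
  simp only [Bfun, Matrix.of_apply, Matrix.cons_val', Matrix.cons_val_zero, Matrix.cons_val_one,
    Matrix.head_cons, Matrix.empty_val', Matrix.cons_val_fin_one, Matrix.head_fin_const]
lemma Be10 : (fun w : ℂ => Bfun w 1 0) = fun w => cf w * (-1) := by
  funext w
  simp only [Bfun, Matrix.of_apply, Matrix.cons_val', Matrix.cons_val_zero, Matrix.cons_val_one,
    Matrix.head_cons, Matrix.empty_val', Matrix.cons_val_fin_one, Matrix.head_fin_const]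
lemma Be11 : (fun w : ℂ => Bfun w 1 1) = fun w => cf w * Zf w := by
  funext w
  simp only [Bfun, Matrix.of_apply, Matrix.cons_val', Matrix.cons_val_zero, Matrix.cons_val_one,
    Matrix.head_cons, Matrix.empty_val', Matrix.cons_val_fin_one, Matrix.head_fin_const]

lemma mD_congr {F G : ℂ → Matrix (Fin 2) (Fin 2) ℂ} {τ : ℂ} (h : F =ᶠ[nhds τ] G) :
    mD F τ = mD G τ := by
  ext i j
  simp only [mD, Matrix.of_apply, wirtD]
  rw [Filter.EventuallyEq.fderiv_eq (h.mono fun w hw => by rw [hw])]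


set_option maxHeartbeats 2000000 in
/-- `K` is invertible-matrix valued on the upper half plane and is a
harmonic metric there: `∂∂̄log(K) = (1/2)·[∂̄log(K), ∂log(K)]`, where
`∂∂̄log(K) := ∂(K⁻¹·∂̄K)`, `∂log(K) := K⁻¹·∂K`, `∂̄log(K) := K⁻¹·∂̄K`. -/
theorem Kmet_harmonic (τ : ℂ) (hτ : 0 < τ.im) :
    IsUnit (Kmet τ).det ∧
    mD (fun z => (Kmet z)⁻¹ * mDbar Kmet z) τ =
      ((1 : ℂ) / 2) •
        ((Kmet τ)⁻¹ * mDbar Kmet τ * ((Kmet τ)⁻¹ * mD Kmet τ) -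
          (Kmet τ)⁻¹ * mD Kmet τ * ((Kmet τ)⁻¹ * mDbar Kmet τ)) := by
  have hy : (τ.im : ℂ) ≠ 0 := Complex.ofReal_ne_zero.mpr (ne_of_gt hτ)
  refine ⟨Kmet_det hy ▸ isUnit_one, ?_⟩
  have hEq : (fun z => (Kmet z)⁻¹ * mDbar Kmet z) =ᶠ[nhds τ] Bfun := by
    filter_upwards [(isOpen_lt continuous_const Complex.continuous_im).mem_nhds hτ] with w hw
    exact keyB (Complex.ofReal_ne_zero.mpr (ne_of_gt hw))
  rw [mD_congr hEq, Kinv hy, mDbar_Kmet hy, mD_Kmet hy]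
  ext i j
  fin_cases i <;> fin_cases j <;>
    simp only [Fin.mk_zero, Fin.mk_one, Fin.isValue, mD, Matrix.of_apply, Matrix.smul_apply,
      Matrix.sub_apply, Matrix.mul_apply, Fin.sum_univ_two, Matrix.cons_val', Matrix.cons_val_zero,
      Matrix.cons_val_one, Matrix.head_cons, Matrix.empty_val', Matrix.cons_val_fin_one,
      Matrix.head_fin_const, smul_eq_mul, Bfun]
  · rw [show (fun z => cf z * (-(Zf z))) = fun w : ℂ => cf w * (-(Zf w)) from rfl,
      ((hasW_cf hy).mul (hasW_Zf τ).neg).wirtD]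
    simp only [cf, Zf]
    field_simp
    ring_nf
    field_simp
    ring_nf
    linear_combination (-(τ.im:ℂ)) * Complex.I_sq
  · rw [((hasW_cf hy).mul ((hasW_Zf τ).mul (hasW_Zf τ))).wirtD]
    have hb36 : ((τ.im:ℂ))^36 * (((τ.im:ℂ))⁻¹)^36 = 1 := by
      rw [← mul_pow, mul_inv_cancel₀ hy, one_pow]
    simp only [cf, Zf]
    field_simp
    ring_nf
    field_simp
    ring_nf
    linear_combination
      (8*(τ.re:ℂ)*(τ.im:ℂ) + 4*I*(τ.im:ℂ)^2) * Complex.I_sq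
  · rw [((hasW_cf hy).mul ((hasW_const 1 τ).neg)).wirtD]
    have hb18 : ((τ.im:ℂ))^18 * (((τ.im:ℂ))⁻¹)^18 = 1 := by
      rw [← mul_pow, mul_inv_cancel₀ hy, one_pow]
    simp only [cf, Zf]
    field_simp
    ring_nf
  · rw [((hasW_cf hy).mul (hasW_Zf τ)).wirtD]
    have hb36 : ((τ.im:ℂ))^36 * (((τ.im:ℂ))⁻¹)^36 = 1 := by
      rw [← mul_pow, mul_inv_cancel₀ hy, one_pow]
    simp only [cf, Zf]
    field_simp
    ring_nf
    field_simp
    ring_nf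
    linear_combination (τ.im:ℂ) * Complex.I_sq

end
end
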